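/- arXiv:1903.08754 — 2 statements merged into one kernel-verified Lean document; each statement's English description precedes it below -/
import Mathlib

section
/- For a metric space X with centroid x_ctr, sets C_1, C_2, C_3 ⊂ X, and ρ ≥ 0, the truncated Hausdorff distance satisfies the extended triangle inequality dl_ρ(C_1, C_3) ≤ dl_{ρ̄}(C_1, C_2) + dl_{ρ̄}(C_2, C_3) whenever ρ̄ > 2ρ + max{dist(x_ctr,C_1), dist(x_ctr,C_2), dist(x_ctr,C_3)}. -/
open Set Filter Metric ENNReal Pointwise Classical

noncomputable section

/-- Excess of `A` over `B`: `sup_{x ∈ A} dist(x,B)`, valued in `ℝ≥0∞`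
(so it is `0` when `A = ∅` and `∞` when `A ≠ ∅`, `B = ∅`). -/
def exs {X : Type*} [PseudoEMetricSpace X] (A B : Set X) : ℝ≥0∞ :=
  ⨆ x ∈ A, EMetric.infEdist x B

/-- Truncated Hausdorff distance with centroid `c` and radius `ρ`. -/
def dl {X : Type*} [PseudoEMetricSpace X] (c : X) (ρ : ℝ≥0∞) (A B : Set X) : ℝ≥0∞ :=
  max (exs (A ∩ EMetric.closedBall c ρ) B) (exs (B ∩ EMetric.closedBall c ρ) A)

/-- Epigraph of an extended-real-valued function. -/
def epi {X : Type*} (f : X → EReal) : Set (X × ℝ) :=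
  {p | f p.1 ≤ (p.2 : EReal)}

/-- Absolute difference of extended reals, valued in `ℝ≥0∞`. -/
def eAbsDiff (a b : EReal) : ℝ≥0∞ :=
  sInf {ε : ℝ≥0∞ | a ≤ b + (ε : EReal) ∧ b ≤ a + (ε : EReal)}

/-!
If `d(c, x) ≤ ρ`, every point of `M` nearly realising `d(x, M) ≤ d(c, M) + ρ` lies within
`2ρ + d(c, M) < r` of `c`, so truncating `M` to the ball `B(r)` leaves `d(x, M)` unchanged.
The triangle inequality `d(x, B) ≤ d(x, M') + exs(M', B)` for `M' = M ∩ B(r)` then bounds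
`d(x, B)` by `exs(A ∩ B(r), M) + exs(M ∩ B(r), B)`.
-/

section Excess

variable {X : Type*} [PseudoEMetricSpace X]

theorem infEDist_le_exs {A B : Set X} {x : X} (hx : x ∈ A) : infEDist x B ≤ exs A B :=
  le_iSup₂ (f := fun y (_ : y ∈ A) => infEDist y B) x hx

theorem exs_le {A B : Set X} {r : ℝ≥0∞} (h : ∀ x ∈ A, infEDist x B ≤ r) : exs A B ≤ r :=
  iSup₂_le h

theorem infEDist_le_infEDist_add_exs (x : X) (S B : Set X) :
    infEDist x B ≤ infEDist x S + exs S B := by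
  refine le_of_forall_gt fun t ht => ?_
  obtain ⟨y, hyS, hxy⟩ := infEDist_lt_iff.1 (lt_tsub_iff_right.2 ht)
  calc infEDist x B ≤ edist x y + infEDist y B := infEDist_le_edist_add_infEDist
    _ ≤ edist x y + exs S B := by gcongr; exact infEDist_le_exs hyS
    _ < t := lt_tsub_iff_right.1 hxy

theorem infEDist_inter_closedEBall_eq {x c : X} {M : Set X} {r : ℝ≥0∞}
    (h : edist x c + infEDist x M < r) : infEDist x (M ∩ closedEBall c r) = infEDist x M := by
  refine le_antisymm (le_of_forall_gt fun t ht => ?_) (infEDist_anti inter_subset_left)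
  obtain ⟨y, hyM, hxy⟩ := infEDist_lt_iff.1 (lt_min ht (lt_tsub_iff_left.2 h))
  have hyc : edist y c ≤ r := calc
    edist y c ≤ edist x y + edist x c := edist_triangle_left y c x
    _ = edist x c + edist x y := add_comm _ _
    _ ≤ r := (lt_tsub_iff_left.1 (hxy.trans_le (min_le_right _ _))).le
  exact infEDist_lt_iff.2 ⟨y, ⟨hyM, mem_closedEBall.2 hyc⟩, hxy.trans_le (min_le_left _ _)⟩

theorem exs_inter_closedEBall_le_add {c : X} {A M B : Set X} {ρ r : ℝ≥0∞}
    (h : 2 * ρ + infEDist c M < r) :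
    exs (A ∩ closedEBall c ρ) B ≤ exs (A ∩ closedEBall c r) M + exs (M ∩ closedEBall c r) B := by
  refine exs_le fun x ⟨hxA, hxρ⟩ => ?_
  have hxc : edist x c ≤ ρ := mem_closedEBall.1 hxρ
  have hclose : edist x c + infEDist x M < r := calc
    edist x c + infEDist x M ≤ ρ + (infEDist c M + ρ) := by
      gcongr
      exact infEDist_le_infEDist_add_edist.trans (by gcongr)
    _ = 2 * ρ + infEDist c M := by ring
    _ < r := h
  have hxr : x ∈ closedEBall c r := mem_closedEBall.2 (le_self_add.trans_lt hclose).le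
  calc infEDist x B
      ≤ infEDist x (M ∩ closedEBall c r) + exs (M ∩ closedEBall c r) B :=
        infEDist_le_infEDist_add_exs x _ B
    _ = infEDist x M + exs (M ∩ closedEBall c r) B := by
        rw [infEDist_inter_closedEBall_eq hclose]
    _ ≤ exs (A ∩ closedEBall c r) M + exs (M ∩ closedEBall c r) B := by
        gcongr; exact infEDist_le_exs ⟨hxA, hxr⟩

end Excess

theorem stmt7_general {X : Type*} [MetricSpace X] (c : X) (C₁ C₂ C₃ : Set X) (ρ ρb : ℝ)
    (hρb : ENNReal.ofReal ρb > 2 * ENNReal.ofReal ρ +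
      max (EMetric.infEdist c C₁) (max (EMetric.infEdist c C₂) (EMetric.infEdist c C₃))) :
    dl c (ENNReal.ofReal ρ) C₁ C₃
      ≤ dl c (ENNReal.ofReal ρb) C₁ C₂ + dl c (ENNReal.ofReal ρb) C₂ C₃ := by
  have h₂ : 2 * ENNReal.ofReal ρ + infEDist c C₂ < ENNReal.ofReal ρb :=
    hρb.trans_le' (by gcongr; exact (le_max_left _ _).trans (le_max_right _ _))
  refine max_le ((exs_inter_closedEBall_le_add h₂).trans ?_)
    ((exs_inter_closedEBall_le_add h₂).trans ?_)
  · exact add_le_add (le_max_left _ _) (le_max_left _ _)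
  · rw [add_comm]
    exact add_le_add (le_max_right _ _) (le_max_right _ _)

/-- triangle inequality in the extended sense. -/
theorem stmt7 {X : Type*} [MetricSpace X] (c : X) (C₁ C₂ C₃ : Set X) (ρ ρb : ℝ)
    (hρ : 0 ≤ ρ)
    (hρb : ENNReal.ofReal ρb > 2 * ENNReal.ofReal ρ +
      max (EMetric.infEdist c C₁) (max (EMetric.infEdist c C₂) (EMetric.infEdist c C₃))) :
    dl c (ENNReal.ofReal ρ) C₁ C₃
      ≤ dl c (ENNReal.ofReal ρb) C₁ C₂ + dl c (ENNReal.ofReal ρb) C₂ C₃ :=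
  stmt7_general c C₁ C₂ C₃ ρ ρb hρb
end
end

section
/- Let X be a metric space, f_1, g_1 : X → [−∞,∞] α-Hölder continuous with common modulus κ and exponent α ∈ (0,∞), and f_2, g_2 : X → [−∞,∞] such that epi(f_1+f_2) and epi(g_1+g_2) are nonempty. For ρ ≥ 0, let A_ρ = (lev_ρ(f_1+f_2) ∪ lev_ρ(g_1+g_2)) ∩ B_X(ρ) be nonempty, ρ̄ ≥ ρ + max{sup_{B_X(ρ)}|f_1|, sup_{B_X(ρ)}|g_1|}, η = dl_{ρ̄}(epi f_2, epi g_2), and ρ̂ > ρ + η. Then dl_ρ(epi(f_1+f_2), epi(g_1+g_2)) ≤ sup_{A_ρ}|f_1 − g_1| + η + κ(ρ̂)·η^α. -/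
open Set Filter Metric ENNReal Pointwise Classical

noncomputable section

/-- Extended-real addition with the minimization-oriented convention `∞ + (-∞) = ∞`. -/
def eAdd (a b : EReal) : EReal := if a = ⊤ ∨ b = ⊤ then ⊤ else a + b


/-! A point `(x, r)` of `epi (f₁ + f₂)` in the `ρ`-ball has `f₁ x = a` finite, and `(x, r - a)`
lies in `epi f₂` within the `ρ̄`-ball, so for every `δ > η` it is `δ`-close to some `(y, t)` in
`epi g₂`. Then `(y, t + g₁ y) ∈ epi (g₁ + g₂)` is at distance at most
`|f₁ x - g₁ x| + δ + |g₁ x - g₁ y|` from `(x, r)`, and since `y` stays in the `ρ̂`-ball, Hölder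
continuity bounds the last term by `κ(ρ̂) δ^α`. Letting `δ → η` gives the bound on one excess;
the other is symmetric. -/

lemma eAbsDiff_comm (a b : EReal) : eAbsDiff a b = eAbsDiff b a := by
  simp only [eAbsDiff, and_comm]

lemma eAbsDiff_coe_coe (a b : ℝ) : eAbsDiff a b = edist a b := by
  have hset : {ε : ℝ≥0∞ | (a : EReal) ≤ b + ε ∧ (b : EReal) ≤ a + ε} = Ici (edist a b) := by
    ext ε
    rcases eq_or_ne ε ⊤ with rfl | hε
    · simp
    · rw [mem_ofPred_eq, mem_Ici, ← EReal.coe_ennreal_toReal hε, ← EReal.coe_add,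
        ← EReal.coe_add, EReal.coe_le_coe_iff, EReal.coe_le_coe_iff, edist_dist,
        ENNReal.ofReal_le_iff_le_toReal hε, Real.dist_eq, abs_sub_le_iff]
      constructor <;> rintro ⟨h₁, h₂⟩ <;> constructor <;> linarith
  rw [eAbsDiff, hset, csInf_Ici]

lemma exists_coe_of_eAbsDiff_ne_top {a : EReal} {b : ℝ} (h : eAbsDiff a b ≠ ⊤) :
    ∃ a' : ℝ, a = a' := by
  obtain ⟨ε, ⟨h₁, h₂⟩, hε⟩ := sInf_lt_iff.mp (lt_top_iff_ne_top.mpr h)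
  rw [← EReal.coe_ennreal_toReal hε.ne] at h₁ h₂
  rw [← EReal.coe_add] at h₁
  induction a using EReal.rec with
  | bot => exact absurd h₂ (by simp)
  | coe a => exact ⟨a, rfl⟩
  | top => exact absurd h₁ (not_le.mpr (EReal.coe_lt_top _))

lemma eAdd_coe_le_coe_iff {a r : ℝ} {u : EReal} : eAdd a u ≤ r ↔ u ≤ (r - a : ℝ) := by
  induction u using EReal.rec with
  | bot => simp [eAdd]
  | coe u =>
    rw [eAdd, if_neg (by simp), ← EReal.coe_add, EReal.coe_le_coe_iff, EReal.coe_le_coe_iff]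
    constructor <;> intro h <;> linarith
  | top => simp only [eAdd, or_true, ite_true, top_le_iff, EReal.coe_ne_top]

lemma eAbsDiff_le_mul_edist_rpow {X : Type*} [PseudoMetricSpace X] {c : X} {h : X → EReal}
    {K α r : ℝ} (hα : 0 ≤ α) (hr : 0 ≤ r)
    (hH : ∀ x ∈ closedBall c r, ∀ x' ∈ closedBall c r,
      eAbsDiff (h x) (h x') ≤ ENNReal.ofReal (K * dist x x' ^ α)) :
    ∀ x ∈ closedEBall c (ENNReal.ofReal r), ∀ x' ∈ closedEBall c (ENNReal.ofReal r),
      eAbsDiff (h x) (h x') ≤ ENNReal.ofReal K * edist x x' ^ α := by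
  intro x hx x' hx'
  rw [closedEBall_ofReal hr] at hx hx'
  rw [edist_dist, ofReal_rpow_of_nonneg dist_nonneg hα, ← ofReal_mul' (by positivity)]
  exact hH x hx x' hx'

lemma le_of_forall_mem_Ioo_le {α β : Type*} [TopologicalSpace α] [LinearOrder α]
    [OrderTopology α] [DenselyOrdered α] [TopologicalSpace β] [Preorder β] [ClosedIciTopology β]
    {F : α → β} {a b : α} {z : β} (hF : ContinuousWithinAt F (Ioi a) a) (hab : a < b)
    (h : ∀ δ ∈ Ioo a b, z ≤ F δ) : z ≤ F a :=
  haveI := nhdsGT_neBot_of_exists_gt ⟨b, hab⟩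
  ge_of_tendsto hF (eventually_of_mem (Ioo_mem_nhdsGT hab) h)

lemma infEDist_epi_eAdd_le {X : Type*} [PseudoEMetricSpace X] {g₁ g₂ : X → EReal} {x : X}
    {s b : ℝ} {δ K : ℝ≥0∞} (hb : g₁ x = b) (hδ : infEDist (x, s) (epi g₂) < δ)
    (hH : ∀ y, edist x y < δ → eAbsDiff (g₁ x) (g₁ y) ≤ K) (hK : K ≠ ⊤) :
    infEDist (x, s + b) (epi fun x => eAdd (g₁ x) (g₂ x)) ≤ δ + K := by
  obtain ⟨⟨y, t⟩, hyt, hxy⟩ := infEDist_lt_iff.mp hδ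
  rw [Prod.edist_eq, max_lt_iff] at hxy
  have hbK := hH y hxy.1
  rw [hb] at hbK
  obtain ⟨b', hb'⟩ := exists_coe_of_eAbsDiff_ne_top
    (eAbsDiff_comm (g₁ y) b ▸ ne_top_of_le_ne_top hK hbK)
  rw [hb', eAbsDiff_coe_coe] at hbK
  have hmem : (y, t + b') ∈ epi fun x => eAdd (g₁ x) (g₂ x) := by
    change eAdd (g₁ y) (g₂ y) ≤ ((t + b' : ℝ) : EReal)
    rwa [hb', eAdd_coe_le_coe_iff, add_sub_cancel_right]
  calc infEDist (x, s + b) _ ≤ edist (x, s + b) (y, t + b') := infEDist_le_edist_of_mem hmem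
    _ ≤ δ + K := by
      rw [Prod.edist_eq, max_le_iff]
      exact ⟨hxy.1.le.trans le_self_add,
        (edist_add_add_le _ _ _ _).trans (add_le_add hxy.2.le hbK)⟩

lemma mem_epi_inter_closedEBall_sub {X : Type*} [PseudoEMetricSpace X] {c : X}
    {f₁ f₂ : X → EReal} {x : X} {r a : ℝ} {R : ℝ≥0∞} (ha : f₁ x = a)
    (hxr : (x, r) ∈ epi (fun x => eAdd (f₁ x) (f₂ x)) ∩ closedEBall (c, (0 : ℝ)) R) :
    (x, r - a) ∈ epi f₂ ∩ closedEBall (c, (0 : ℝ)) (R + edist a 0) := by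
  obtain ⟨hxr, hball⟩ := hxr
  rw [mem_closedEBall, Prod.edist_eq, max_le_iff] at hball
  refine ⟨(eAdd_coe_le_coe_iff (u := f₂ x)).mp (ha ▸ hxr), ?_⟩
  rw [mem_closedEBall, Prod.edist_eq, max_le_iff]
  refine ⟨hball.1.trans le_self_add, ?_⟩
  calc edist (r - a) 0 = edist r a := by
        rw [edist_dist, edist_dist, Real.dist_eq, Real.dist_eq, sub_zero]
    _ ≤ edist r 0 + edist a 0 := edist_triangle_right _ _ _
    _ ≤ R + edist a 0 := add_le_add hball.2 le_rfl

lemma infEDist_epi_eAdd_le_of_holder {X : Type*} [PseudoEMetricSpace X] {c : X}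
    {g₁ g₂ : X → EReal} {x : X} {s b α : ℝ} {r R κ η : ℝ≥0∞} (hα : 0 ≤ α) (hκ : κ ≠ ⊤)
    (hH : ∀ x ∈ closedEBall c R, ∀ y ∈ closedEBall c R,
      eAbsDiff (g₁ x) (g₁ y) ≤ κ * edist x y ^ α)
    (hx : x ∈ closedEBall c r) (hR : r + η < R) (hb : g₁ x = b)
    (hη : infEDist (x, s) (epi g₂) ≤ η) :
    infEDist (x, s + b) (epi fun x => eAdd (g₁ x) (g₂ x)) ≤ η + κ * η ^ α := by
  have hcont : ContinuousWithinAt (fun δ => δ + κ * δ ^ α) (Ioi η) η :=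
    (continuous_id.add
      ((ENNReal.continuous_const_mul hκ).comp ENNReal.continuous_rpow_const)).continuousWithinAt
  refine le_of_forall_mem_Ioo_le (F := fun δ => δ + κ * δ ^ α) hcont
    (lt_tsub_iff_left.mpr hR) fun δ hδ => ?_
  have hδR : r + δ < R := lt_tsub_iff_left.mp hδ.2
  have hδ_top : δ ≠ ⊤ := (le_add_self.trans_lt hδR).ne_top
  refine infEDist_epi_eAdd_le hb (hη.trans_lt hδ.1) (fun y hy => ?_)
    (mul_ne_top hκ (rpow_ne_top_of_nonneg hα hδ_top))
  have hxR : x ∈ closedEBall c R := mem_closedEBall.mp hx |>.trans (le_self_add.trans hδR.le)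
  have hyR : y ∈ closedEBall c R :=
    calc edist y c ≤ edist y x + edist x c := edist_triangle _ _ _
      _ ≤ δ + r := add_le_add (edist_comm x y ▸ hy.le) hx
      _ ≤ R := (add_comm δ r ▸ hδR).le
  exact (hH x hxR y hyR).trans (by gcongr)

lemma exs_epi_eAdd_le {X : Type*} [PseudoMetricSpace X] {c : X} {f₁ f₂ g₁ g₂ : X → EReal}
    {ρ ρb α : ℝ} {R κ η S : ℝ≥0∞} (hρ : 0 ≤ ρ) (hα : 0 ≤ α) (hκ : κ ≠ ⊤)
    (hg₁H : ∀ x ∈ closedEBall c R, ∀ y ∈ closedEBall c R,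
      eAbsDiff (g₁ x) (g₁ y) ≤ κ * edist x y ^ α)
    (hf₁ : ∀ x ∈ closedBall c ρ, ENNReal.ofReal ρ + eAbsDiff (f₁ x) 0 ≤ ENNReal.ofReal ρb)
    (hg₁ : ∀ x ∈ closedBall c ρ, eAbsDiff (g₁ x) 0 ≠ ⊤)
    (hη : exs (epi f₂ ∩ closedEBall (c, (0 : ℝ)) (ENNReal.ofReal ρb)) (epi g₂) ≤ η)
    (hR : ENNReal.ofReal ρ + η < R)
    (hS : ∀ x ∈ closedBall c ρ, eAdd (f₁ x) (f₂ x) ≤ ((ρ : ℝ) : EReal) →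
      eAbsDiff (f₁ x) (g₁ x) ≤ S) :
    exs (epi (fun x => eAdd (f₁ x) (f₂ x)) ∩ closedEBall (c, (0 : ℝ)) (ENNReal.ofReal ρ))
      (epi fun x => eAdd (g₁ x) (g₂ x)) ≤ S + η + κ * η ^ α := by
  refine iSup₂_le fun ⟨x, r⟩ hxr => ?_
  have hball := hxr.2
  rw [mem_closedEBall, Prod.edist_eq, max_le_iff] at hball
  obtain ⟨hxc, hr⟩ := hball
  have hx : x ∈ closedBall c ρ := by rw [← closedEBall_ofReal hρ]; exact hxc
  have hfx : eAbsDiff (f₁ x) ((0 : ℝ) : EReal) ≠ ⊤ :=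
    ne_top_of_le_ne_top ofReal_ne_top (le_add_self.trans (hf₁ x hx))
  obtain ⟨a, ha⟩ := exists_coe_of_eAbsDiff_ne_top hfx
  obtain ⟨b, hb⟩ := exists_coe_of_eAbsDiff_ne_top (b := 0) (hg₁ x hx)
  have hlev : eAdd (f₁ x) (f₂ x) ≤ ((ρ : ℝ) : EReal) := by
    rw [edist_dist, Real.dist_0_eq_abs, ENNReal.ofReal_le_ofReal_iff hρ] at hr
    exact hxr.1.trans (EReal.coe_le_coe_iff.mpr ((le_abs_self r).trans hr))
  have hshift : (x, r - a) ∈ epi f₂ ∩ closedEBall (c, (0 : ℝ)) (ENNReal.ofReal ρb) := by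
    refine inter_subset_inter_right _ (closedEBall_subset_closedEBall ?_)
      (mem_epi_inter_closedEBall_sub ha hxr)
    rw [← eAbsDiff_coe_coe, EReal.coe_zero, ← ha]
    exact hf₁ x hx
  have hmove : edist (x, r) (x, r - a + b) = edist a b := by
    rw [Prod.edist_eq, edist_self, max_eq_right zero_le, edist_dist, edist_dist,
      Real.dist_eq, Real.dist_eq]
    congr 2; ring
  calc infEDist (x, r) _ ≤ infEDist (x, r - a + b) _ + edist (x, r) (x, r - a + b) :=
        infEDist_le_infEDist_add_edist
    _ ≤ (η + κ * η ^ α) + S := by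
        refine add_le_add (infEDist_epi_eAdd_le_of_holder hα hκ hg₁H hxc hR hb
          ((le_iSup₂_of_le _ hshift le_rfl).trans hη)) ?_
        rw [hmove, ← eAbsDiff_coe_coe, ← ha, ← hb]
        exact hS x hx hlev
    _ = S + η + κ * η ^ α := by ring

theorem stmt14_general {X : Type*} [MetricSpace X] (c : X) (f₁ f₂ g₁ g₂ : X → EReal)
    (κ : ℝ → ℝ) (α : ℝ) (hα : 0 < α)
    (hf₁H : ∀ r : ℝ, 0 ≤ r → ∀ x ∈ Metric.closedBall c r, ∀ x' ∈ Metric.closedBall c r,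
        eAbsDiff (f₁ x) (f₁ x') ≤ ENNReal.ofReal (κ r * dist x x' ^ α))
    (hg₁H : ∀ r : ℝ, 0 ≤ r → ∀ x ∈ Metric.closedBall c r, ∀ x' ∈ Metric.closedBall c r,
        eAbsDiff (g₁ x) (g₁ x') ≤ ENNReal.ofReal (κ r * dist x x' ^ α))
    (ρ ρb ρh : ℝ) (hρ : 0 ≤ ρ) (A : Set X)
    (hA : A = ({x | eAdd (f₁ x) (f₂ x) ≤ ((ρ : ℝ) : EReal)}
        ∪ {x | eAdd (g₁ x) (g₂ x) ≤ ((ρ : ℝ) : EReal)}) ∩ Metric.closedBall c ρ)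
    (hρb : ENNReal.ofReal ρb ≥ ENNReal.ofReal ρ +
      max (⨆ x ∈ Metric.closedBall c ρ, eAbsDiff (f₁ x) 0)
        (⨆ x ∈ Metric.closedBall c ρ, eAbsDiff (g₁ x) 0))
    (η : ℝ≥0∞) (hη : η = dl (c, (0 : ℝ)) (ENNReal.ofReal ρb) (epi f₂) (epi g₂))
    (hρh : ENNReal.ofReal ρh > ENNReal.ofReal ρ + η) :
    dl (c, (0 : ℝ)) (ENNReal.ofReal ρ)
        (epi (fun x => eAdd (f₁ x) (f₂ x))) (epi (fun x => eAdd (g₁ x) (g₂ x)))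
      ≤ (⨆ x ∈ A, eAbsDiff (f₁ x) (g₁ x)) + η + ENNReal.ofReal (κ ρh) * η ^ α := by
  have hρh₀ : 0 ≤ ρh := (ENNReal.ofReal_pos.mp (pos_of_gt hρh)).le
  have hf₁ : ∀ x ∈ closedBall c ρ, ENNReal.ofReal ρ + eAbsDiff (f₁ x) 0 ≤ ENNReal.ofReal ρb :=
    fun x hx => (add_le_add le_rfl
      ((le_iSup₂_of_le x hx le_rfl).trans (le_max_left _ _))).trans hρb
  have hg₁ : ∀ x ∈ closedBall c ρ, ENNReal.ofReal ρ + eAbsDiff (g₁ x) 0 ≤ ENNReal.ofReal ρb :=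
    fun x hx => (add_le_add le_rfl
      ((le_iSup₂_of_le x hx le_rfl).trans (le_max_right _ _))).trans hρb
  have hfinite : ∀ {h : X → EReal}, (∀ x ∈ closedBall c ρ,
      ENNReal.ofReal ρ + eAbsDiff (h x) 0 ≤ ENNReal.ofReal ρb) →
      ∀ x ∈ closedBall c ρ, eAbsDiff (h x) 0 ≠ ⊤ :=
    fun hb x hx => ne_top_of_le_ne_top ofReal_ne_top (le_add_self.trans (hb x hx))
  have hA_le : ∀ x ∈ closedBall c ρ,
      eAdd (f₁ x) (f₂ x) ≤ ((ρ : ℝ) : EReal) ∨ eAdd (g₁ x) (g₂ x) ≤ ((ρ : ℝ) : EReal) →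
      eAbsDiff (f₁ x) (g₁ x) ≤ ⨆ x ∈ A, eAbsDiff (f₁ x) (g₁ x) :=
    fun x hx hlev => le_iSup₂_of_le x (hA ▸ ⟨hlev, hx⟩) le_rfl
  apply max_le
  · exact exs_epi_eAdd_le hρ hα.le ofReal_ne_top
      (eAbsDiff_le_mul_edist_rpow hα.le hρh₀ (hg₁H ρh hρh₀)) hf₁ (hfinite hg₁)
      (hη ▸ le_max_left _ _) hρh fun x hx hlev => hA_le x hx (.inl hlev)
  · exact exs_epi_eAdd_le hρ hα.le ofReal_ne_top
      (eAbsDiff_le_mul_edist_rpow hα.le hρh₀ (hf₁H ρh hρh₀)) hg₁ (hfinite hf₁)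
      (hη ▸ le_max_right _ _) hρh
      fun x hx hlev => eAbsDiff_comm (f₁ x) (g₁ x) ▸ hA_le x hx (.inr hlev)

/-- sums under Hölder continuity. -/
theorem stmt14 {X : Type*} [MetricSpace X] (c : X) (f₁ f₂ g₁ g₂ : X → EReal)
    (κ : ℝ → ℝ) (hκ : ∀ r, 0 ≤ κ r) (α : ℝ) (hα : 0 < α)
    (hf₁H : ∀ r : ℝ, 0 ≤ r → ∀ x ∈ Metric.closedBall c r, ∀ x' ∈ Metric.closedBall c r,
        eAbsDiff (f₁ x) (f₁ x') ≤ ENNReal.ofReal (κ r * dist x x' ^ α))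
    (hg₁H : ∀ r : ℝ, 0 ≤ r → ∀ x ∈ Metric.closedBall c r, ∀ x' ∈ Metric.closedBall c r,
        eAbsDiff (g₁ x) (g₁ x') ≤ ENNReal.ofReal (κ r * dist x x' ^ α))
    (hfepi : (epi (fun x => eAdd (f₁ x) (f₂ x))).Nonempty)
    (hgepi : (epi (fun x => eAdd (g₁ x) (g₂ x))).Nonempty)
    (ρ ρb ρh : ℝ) (hρ : 0 ≤ ρ) (A : Set X)
    (hA : A = ({x | eAdd (f₁ x) (f₂ x) ≤ ((ρ : ℝ) : EReal)}
        ∪ {x | eAdd (g₁ x) (g₂ x) ≤ ((ρ : ℝ) : EReal)}) ∩ Metric.closedBall c ρ)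
    (hAne : A.Nonempty)
    (hρb : ENNReal.ofReal ρb ≥ ENNReal.ofReal ρ +
      max (⨆ x ∈ Metric.closedBall c ρ, eAbsDiff (f₁ x) 0)
        (⨆ x ∈ Metric.closedBall c ρ, eAbsDiff (g₁ x) 0))
    (η : ℝ≥0∞) (hη : η = dl (c, (0 : ℝ)) (ENNReal.ofReal ρb) (epi f₂) (epi g₂))
    (hρh : ENNReal.ofReal ρh > ENNReal.ofReal ρ + η) :
    dl (c, (0 : ℝ)) (ENNReal.ofReal ρ)
        (epi (fun x => eAdd (f₁ x) (f₂ x))) (epi (fun x => eAdd (g₁ x) (g₂ x)))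
      ≤ (⨆ x ∈ A, eAbsDiff (f₁ x) (g₁ x)) + η + ENNReal.ofReal (κ ρh) * η ^ α :=
  stmt14_general c f₁ f₂ g₁ g₂ κ α hα hf₁H hg₁H ρ ρb ρh hρ A hA hρb η hη hρh
end
end
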